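/- Let G be a P_6-free chordal graph. Then every irredundant vertex of G is a simplicial vertex of the completion graph G_co, and the set IR(G) of irredundant vertices forms an independent set in G_co. -/

import Mathlib

/-! If adjacent vertices `a`, `b` both have inclusion-minimal closed neighbourhoods but
`N[a] ≠ N[b]`, minimality yields `c ∈ N(a) \ N[b]` and `d ∈ N(b) \ N[a]`, and then, since
`N[c] ≠ N[a]` and `N[d] ≠ N[b]`, vertices `e ∈ N(c) \ N[a]` and `f ∈ N(d) \ N[b]`.
Chordality rules out every chord of the path `e c a b d f` except `ef`, so these six vertices
induce a `C₆` or a `P₆`. Hence `IR` is independent in `G`, all `G_co`-neighbours of an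
irredundant vertex are redundant, and the redundant vertices form a clique of `G_co`. -/

open Set

variable {V : Type*}

/-- The closed neighbourhood `N_G[x]` of a vertex. -/
def closedNbhd (G : SimpleGraph V) (x : V) : Set V := insert x (G.neighborSet x)

/-- The closed neighbourhood `N_G[A]` of a set of vertices. -/
def closedNbhdSet (G : SimpleGraph V) (A : Set V) : Set V := ⋃ x ∈ A, closedNbhd G x

/-- `D` is a dominating set of `G`. -/
def Dominates (G : SimpleGraph V) (D : Set V) : Prop := ∀ v, v ∈ closedNbhdSet G D

/-- `IR` is a valid set of irredundant vertices of `G`: every member has an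
inclusion-minimal closed neighbourhood, exactly one representative is kept per class of
vertices with equal closed neighbourhoods, and every vertex with a minimal closed
neighbourhood has a representative in `IR`. The remaining (redundant) vertices form
`IRᶜ = RN(G)`. -/
def IsIrrSet (G : SimpleGraph V) (IR : Set V) : Prop :=
  (∀ x ∈ IR, ∀ y : V, closedNbhd G y ⊆ closedNbhd G x → closedNbhd G y = closedNbhd G x) ∧
  (∀ x ∈ IR, ∀ y ∈ IR, closedNbhd G x = closedNbhd G y → x = y) ∧
  (∀ x : V, (∀ y : V, closedNbhd G y ⊆ closedNbhd G x → closedNbhd G y = closedNbhd G x) →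
    ∃ z ∈ IR, closedNbhd G z = closedNbhd G x)

/-- The completion `G_co` of `G` (w.r.t. the irredundant set `IR`): all edges between
distinct redundant vertices are added. -/
def completion (G : SimpleGraph V) (IR : Set V) : SimpleGraph V where
  Adj x y := G.Adj x y ∨ (x ≠ y ∧ x ∉ IR ∧ y ∉ IR)
  symm := by
    refine ⟨?_⟩
    intro x y h
    rcases h with h | ⟨hne, hx, hy⟩
    · exact Or.inl h.symm
    · exact Or.inr ⟨hne.symm, hy, hx⟩
  loopless := by
    refine ⟨?_⟩
    intro x h
    rcases h with h | ⟨hne, _, _⟩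
    · exact G.ne_of_adj h rfl
    · exact hne rfl

/-- A graph is chordal if it has no induced cycle of length at least 4. -/
def Chordal (G : SimpleGraph V) : Prop :=
  ∀ n : ℕ, 4 ≤ n → IsEmpty (SimpleGraph.cycleGraph n ↪g G)

/-- A graph is `P₆`-free if it has no induced path on 6 vertices. -/
def P6Free (G : SimpleGraph V) : Prop := IsEmpty (SimpleGraph.pathGraph 6 ↪g G)

/-- A graph is a split graph if its vertex set partitions into a clique and an
independent set. -/
def IsSplit (G : SimpleGraph V) : Prop :=
  ∃ C S : Set V, C ∪ S = Set.univ ∧ C ∩ S = ∅ ∧ G.IsClique C ∧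
    S.Pairwise fun a b => ¬ G.Adj a b

section

variable {G : SimpleGraph V} {IR : Set V}

@[simp]
lemma mem_closedNbhd {x y : V} : y ∈ closedNbhd G x ↔ y = x ∨ G.Adj x y :=
  Set.mem_insert_iff

lemma closedNbhd_ne_of_adj_of_not_adj {x y z : V} (hxz : G.Adj x z)
    (hzy : z ≠ y) (hyz : ¬ G.Adj y z) : closedNbhd G y ≠ closedNbhd G x :=
  (ne_of_mem_of_not_mem' (mem_closedNbhd.2 (.inr hxz)) (by simp [hzy, hyz])).symm

def IsMinimalClosedNbhd (G : SimpleGraph V) (x : V) : Prop :=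
  ∀ y, closedNbhd G y ⊆ closedNbhd G x → closedNbhd G y = closedNbhd G x

lemma IsMinimalClosedNbhd.exists_adj_not_adj {x y : V}
    (hx : IsMinimalClosedNbhd G x) (hxy : G.Adj x y)
    (hne : closedNbhd G y ≠ closedNbhd G x) : ∃ z, G.Adj y z ∧ z ≠ x ∧ ¬ G.Adj x z := by
  obtain ⟨z, hzy, hzx⟩ := Set.not_subset.1 fun h => hne (hx y h)
  simp only [mem_closedNbhd, not_or] at hzy hzx
  rcases hzy with rfl | hyz
  · exact absurd hxy hzx.2
  · exact ⟨z, hyz, hzx⟩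

namespace Chordal

lemma false_of_induced_cycle4 (hG : Chordal G) {a b c d : V}
    (hab : G.Adj a b) (hbc : G.Adj b c) (hcd : G.Adj c d) (hda : G.Adj d a)
    (hac : ¬ G.Adj a c) (hbd : ¬ G.Adj b d) (hac' : a ≠ c) (hbd' : b ≠ d) : False := by
  refine (hG 4 le_rfl).elim ⟨⟨![a, b, c, d], ?_⟩, ?_⟩
  · intro i j h
    fin_cases i <;> fin_cases j <;> simp_all [G.adj_comm]
  · intro i j
    change G.Adj (![a, b, c, d] i) (![a, b, c, d] j) ↔ _
    fin_cases i <;> fin_cases j <;> simp_all +decide [G.adj_comm]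

lemma false_of_induced_cycle5 (hG : Chordal G) {a b c d e : V}
    (hab : G.Adj a b) (hbc : G.Adj b c) (hcd : G.Adj c d) (hde : G.Adj d e) (hea : G.Adj e a)
    (hac : ¬ G.Adj a c) (had : ¬ G.Adj a d) (hbd : ¬ G.Adj b d) (hbe : ¬ G.Adj b e)
    (hce : ¬ G.Adj c e) : False := by
  refine (hG 5 (by norm_num)).elim ⟨⟨![a, b, c, d, e], ?_⟩, ?_⟩
  · intro i j h
    fin_cases i <;> fin_cases j <;> simp_all [G.adj_comm]
  · intro i j
    change G.Adj (![a, b, c, d, e] i) (![a, b, c, d, e] j) ↔ _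
    fin_cases i <;> fin_cases j <;> simp_all +decide [G.adj_comm]

lemma false_of_induced_cycle6 (hG : Chordal G) {a b c d e f : V}
    (hab : G.Adj a b) (hbc : G.Adj b c) (hcd : G.Adj c d) (hde : G.Adj d e) (hef : G.Adj e f)
    (hfa : G.Adj f a) (hac : ¬ G.Adj a c) (had : ¬ G.Adj a d) (hae : ¬ G.Adj a e)
    (hbd : ¬ G.Adj b d) (hbe : ¬ G.Adj b e) (hbf : ¬ G.Adj b f) (hce : ¬ G.Adj c e)
    (hcf : ¬ G.Adj c f) (hdf : ¬ G.Adj d f) : False := by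
  refine (hG 6 (by norm_num)).elim ⟨⟨![a, b, c, d, e, f], ?_⟩, ?_⟩
  · intro i j h
    fin_cases i <;> fin_cases j <;> simp_all [G.adj_comm]
  · intro i j
    change G.Adj (![a, b, c, d, e, f] i) (![a, b, c, d, e, f] j) ↔ _
    fin_cases i <;> fin_cases j <;> simp_all +decide [G.adj_comm]

end Chordal

lemma P6Free.false_of_induced_path (hG : P6Free G) {a b c d e f : V}
    (hab : G.Adj a b) (hbc : G.Adj b c) (hcd : G.Adj c d) (hde : G.Adj d e) (hef : G.Adj e f)
    (hac : ¬ G.Adj a c) (had : ¬ G.Adj a d) (hae : ¬ G.Adj a e) (haf : ¬ G.Adj a f)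
    (hbd : ¬ G.Adj b d) (hbe : ¬ G.Adj b e) (hbf : ¬ G.Adj b f) (hce : ¬ G.Adj c e)
    (hcf : ¬ G.Adj c f) (hdf : ¬ G.Adj d f) : False := by
  refine hG.elim ⟨⟨![a, b, c, d, e, f], ?_⟩, ?_⟩
  · intro i j h
    fin_cases i <;> fin_cases j <;> simp_all [G.adj_comm]
  · intro i j
    change G.Adj (![a, b, c, d, e, f] i) (![a, b, c, d, e, f] j) ↔ _
    fin_cases i <;> fin_cases j <;> simp_all +decide [SimpleGraph.pathGraph_adj, G.adj_comm]

lemma closedNbhd_eq_of_adj (hch : Chordal G) (hp6 : P6Free G) {a b : V}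
    (hab : G.Adj a b) (ha : IsMinimalClosedNbhd G a) (hb : IsMinimalClosedNbhd G b) :
    closedNbhd G a = closedNbhd G b := by
  by_contra hne
  obtain ⟨c, hac, hcb, hbc⟩ := hb.exists_adj_not_adj hab.symm hne
  obtain ⟨d, hbd, hda, had⟩ := ha.exists_adj_not_adj hab (Ne.symm hne)
  have hcd : ¬ G.Adj c d := fun h =>
    hch.false_of_induced_cycle4 hab hbd h.symm hac.symm had hbc hda.symm hcb.symm
  obtain ⟨e, hce, hea, hae⟩ := ha.exists_adj_not_adj hac
    (closedNbhd_ne_of_adj_of_not_adj hab hcb.symm (hbc ∘ .symm))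
  obtain ⟨f, hdf, hfb, hbf⟩ := hb.exists_adj_not_adj hbd
    (closedNbhd_ne_of_adj_of_not_adj hab.symm hda.symm (had ∘ .symm))
  have hbe : ¬ G.Adj b e := fun h =>
    hch.false_of_induced_cycle4 hab h hce.symm hac.symm hae hbc hea.symm hcb.symm
  have hde : ¬ G.Adj d e := fun h =>
    hch.false_of_induced_cycle5 hab hbd h hce.symm hac.symm had hae hbe hbc (hcd ∘ .symm)
  have haf : ¬ G.Adj a f := fun h =>
    hch.false_of_induced_cycle4 hab hbd hdf h.symm had hbf hda.symm hfb.symm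
  have hcf : ¬ G.Adj c f := fun h =>
    hch.false_of_induced_cycle5 hab.symm hac h hdf.symm hbd.symm hbc hbf haf had hcd
  by_cases hef : G.Adj e f
  · exact hch.false_of_induced_cycle6 hab hbd hdf hef.symm hce.symm hac.symm had haf hae hbf
      hbe hbc hde (hcd ∘ .symm) (hcf ∘ .symm)
  · exact hp6.false_of_induced_path hce.symm hac.symm hab hbd hdf (hae ∘ .symm) (hbe ∘ .symm)
      (hde ∘ .symm) hef (hbc ∘ .symm) hcd hcf had haf hbf

lemma IsIrrSet.not_adj (hIR : IsIrrSet G IR) (hch : Chordal G) (hp6 : P6Free G) {a b : V}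
    (ha : a ∈ IR) (hb : b ∈ IR) (hab : a ≠ b) : ¬ G.Adj a b :=
  fun h => hab (hIR.2.1 a ha b hb (closedNbhd_eq_of_adj hch hp6 h (hIR.1 a ha) (hIR.1 b hb)))

lemma completion_adj_iff_of_mem {x y : V} (hx : x ∈ IR) :
    (completion G IR).Adj x y ↔ G.Adj x y := by
  simp [completion, hx]

lemma IsIrrSet.notMem_of_completion_adj (hIR : IsIrrSet G IR) (hch : Chordal G)
    (hp6 : P6Free G) {x y : V} (hx : x ∈ IR)
    (hxy : (completion G IR).Adj x y) : y ∉ IR :=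
  fun hy => hIR.not_adj hch hp6 hx hy hxy.ne ((completion_adj_iff_of_mem hx).1 hxy)

end

theorem stmt_15_general (G : SimpleGraph V) (hch : Chordal G) (hp6 : P6Free G)
    (IR : Set V) (hIR : IsIrrSet G IR) :
    (∀ x ∈ IR, (completion G IR).IsClique ((completion G IR).neighborSet x)) ∧
    (IR.Pairwise fun a b => ¬ (completion G IR).Adj a b) :=
  ⟨fun _ hx _ hu _ hv huv => Or.inr ⟨huv, hIR.notMem_of_completion_adj hch hp6 hx hu,
      hIR.notMem_of_completion_adj hch hp6 hx hv⟩,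
    fun _ ha _ hb _ hab => hIR.notMem_of_completion_adj hch hp6 ha hab hb⟩

/-- In a `P₆`-free chordal graph `G`, every irredundant vertex is simplicial in the
completion `G_co`, and the irredundant vertices form an independent set in `G_co`. -/
theorem stmt_15 [Fintype V] (G : SimpleGraph V) (hch : Chordal G) (hp6 : P6Free G)
    (IR : Set V) (hIR : IsIrrSet G IR) :
    (∀ x ∈ IR, (completion G IR).IsClique ((completion G IR).neighborSet x)) ∧
    (IR.Pairwise fun a b => ¬ (completion G IR).Adj a b) :=
  stmt_15_general G hch hp6 IR hIR
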